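/- arXiv:2103.10423 — 5 statements merged into one kernel-verified Lean document; each statement's English description precedes it below -/
import Mathlib

section
/- For integers a ≤ p with a ≥ 1, a real η > 0, and a finite set Y, if A₁, ..., A_p are subsets of Y each of size at least ((a−1)/p + η)|Y|, then there exists a subset I ⊆ [p] with |I| = a such that |⋂_{i∈I} A_i| ≥ p^{−a}·η·|Y|. -/
open Finset

theorem stmt_4 {α : Type*} [DecidableEq α] (p a : ℕ) (ha : 1 ≤ a) (hap : a ≤ p)
    (η : ℝ) (hη : 0 < η) (Y : Finset α) (A : Fin p → Finset α)
    (hsub : ∀ i, A i ⊆ Y)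
    (hcard : ∀ i, (((a : ℝ) - 1) / p + η) * Y.card ≤ ((A i).card : ℝ)) :
    ∃ I : Finset (Fin p), I.card = a ∧
      ((p : ℝ) ^ a)⁻¹ * η * Y.card ≤
        ((Y.filter fun y => ∀ i ∈ I, y ∈ A i).card : ℝ) := by
  classical
  have hp : 0 < p := lt_of_lt_of_le ha hap
  have hpR : (0:ℝ) < (p:ℝ) := by exact_mod_cast hp
  set T : α → Finset (Fin p) := fun y => Finset.univ.filter fun i => y ∈ A i with hT
  -- Step 1: double counting
  have hswap : ∑ y ∈ Y, ((T y).card : ℝ) = ∑ i : Fin p, ((A i).card : ℝ) := by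
    have : ∑ y ∈ Y, (T y).card = ∑ i : Fin p, (A i).card := by
      simp only [hT, card_filter]
      rw [Finset.sum_comm]
      refine Finset.sum_congr rfl fun i _ => ?_
      rw [← card_filter, Finset.filter_mem_eq_inter,
        Finset.inter_eq_right.mpr (hsub i)]
    exact_mod_cast congrArg (Nat.cast : ℕ → ℝ) this
  have hlow : ((a:ℝ) - 1) * Y.card + (p:ℝ) * η * Y.card ≤ ∑ y ∈ Y, ((T y).card : ℝ) := by
    rw [hswap]
    calc ((a:ℝ) - 1) * Y.card + (p:ℝ) * η * Y.card
        = ∑ _i : Fin p, ((((a:ℝ) - 1) / p + η) * Y.card) := by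
          rw [Finset.sum_const, Finset.card_univ, Fintype.card_fin, nsmul_eq_mul]
          field_simp
      _ ≤ ∑ i : Fin p, ((A i).card : ℝ) := Finset.sum_le_sum fun i _ => hcard i
  -- Step 2: B = elements in at least a sets
  set B : Finset α := Y.filter (fun y => a ≤ (T y).card) with hB
  have hBle : ∑ y ∈ Y, ((T y).card : ℝ) ≤ ((a:ℝ) - 1) * Y.card + ((p:ℝ) - a + 1) * B.card := by
    have hsplit : ∑ y ∈ Y, ((T y).card : ℝ)
        = ∑ y ∈ B, ((T y).card : ℝ) + ∑ y ∈ Y.filter (fun y => ¬ a ≤ (T y).card), ((T y).card : ℝ) := by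
      rw [hB, Finset.sum_filter_add_sum_filter_not]
    rw [hsplit]
    have h1 : ∑ y ∈ B, ((T y).card : ℝ) ≤ (p:ℝ) * B.card := by
      calc ∑ y ∈ B, ((T y).card : ℝ) ≤ ∑ _y ∈ B, (p:ℝ) := by
            refine Finset.sum_le_sum fun y _ => ?_
            have : (T y).card ≤ p := by
              simpa using Finset.card_le_card (Finset.filter_subset _ (Finset.univ : Finset (Fin p)))
            exact_mod_cast this
        _ = (p:ℝ) * B.card := by rw [Finset.sum_const, nsmul_eq_mul]; ring
    have h2 : ∑ y ∈ Y.filter (fun y => ¬ a ≤ (T y).card), ((T y).card : ℝ)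
        ≤ ((a:ℝ) - 1) * (Y.filter (fun y => ¬ a ≤ (T y).card)).card := by
      calc ∑ y ∈ Y.filter (fun y => ¬ a ≤ (T y).card), ((T y).card : ℝ)
          ≤ ∑ _y ∈ Y.filter (fun y => ¬ a ≤ (T y).card), ((a:ℝ) - 1) := by
            refine Finset.sum_le_sum fun y hy => ?_
            have := (Finset.mem_filter.mp hy).2
            have h' : (T y).card ≤ a - 1 := Nat.le_sub_one_of_lt (Nat.lt_of_not_le this)
            have : ((T y).card : ℝ) ≤ ((a - 1 : ℕ) : ℝ) := by exact_mod_cast h'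
            calc ((T y).card : ℝ) ≤ ((a - 1 : ℕ) : ℝ) := this
              _ = (a:ℝ) - 1 := by
                  have : (1:ℕ) ≤ a := ha
                  push_cast [Nat.cast_sub this]
                  ring
        _ = ((a:ℝ) - 1) * (Y.filter (fun y => ¬ a ≤ (T y).card)).card := by
            rw [Finset.sum_const, nsmul_eq_mul]; ring
    have hcards : ((Y.filter (fun y => ¬ a ≤ (T y).card)).card : ℝ) = (Y.card : ℝ) - B.card := by
      have := Finset.card_filter_add_card_filter_not
        (s := Y) (p := fun y => a ≤ (T y).card)
      have h := this
      rw [hB]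
      push_cast [← h]
      ring
    have ha1 : (0:ℝ) ≤ (a:ℝ) - 1 := by
      have : (1:ℝ) ≤ (a:ℝ) := by exact_mod_cast ha
      linarith
    nlinarith [h1, h2, hcards]
  have hBcard : η * Y.card ≤ (B.card : ℝ) := by
    have hpa : ((p:ℝ) - a + 1) ≤ (p:ℝ) := by
      have : (1:ℝ) ≤ (a:ℝ) := by exact_mod_cast ha
      linarith
    have hBnn : (0:ℝ) ≤ (B.card : ℝ) := by positivity
    have key : (p:ℝ) * η * Y.card ≤ ((p:ℝ) - a + 1) * B.card := by linarith
    have key2 : (p:ℝ) * (η * Y.card) ≤ (p:ℝ) * B.card := by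
      calc (p:ℝ) * (η * Y.card) ≤ ((p:ℝ) - a + 1) * B.card := by linarith
        _ ≤ (p:ℝ) * B.card := mul_le_mul_of_nonneg_right hpa hBnn
    exact le_of_mul_le_mul_left key2 hpR
  -- Step 3: distribute B over a-subsets
  set S : Finset (Finset (Fin p)) := Finset.univ.powersetCard a with hS
  have hmemS : ∀ I, I ∈ S ↔ I.card = a := by
    intro I
    simp [hS, Finset.mem_powersetCard]
  set g : α → Finset (Fin p) := fun y =>
    if h : a ≤ (T y).card then (Finset.exists_subset_card_eq h).choose else ∅ with hg
  have hgS : ∀ y ∈ B, g y ∈ S := by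
    intro y hy
    have hy' := (Finset.mem_filter.mp hy).2
    rw [hmemS, hg]
    simp only [dif_pos hy']
    exact (Finset.exists_subset_card_eq hy').choose_spec.2
  have hfib : B.card = ∑ I ∈ S, (B.filter fun y => g y = I).card :=
    Finset.card_eq_sum_card_fiberwise hgS
  have hfible : ∀ I ∈ S, (B.filter fun y => g y = I).card
      ≤ (Y.filter fun y => ∀ i ∈ I, y ∈ A i).card := by
    intro I _
    apply Finset.card_le_card
    intro y hy
    obtain ⟨hyB, hgy⟩ := Finset.mem_filter.mp hy
    obtain ⟨hyY, hya⟩ := Finset.mem_filter.mp hyB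
    refine Finset.mem_filter.mpr ⟨hyY, fun i hi => ?_⟩
    have hsub' : g y ⊆ T y := by
      rw [hg]; simp only [dif_pos hya]
      exact (Finset.exists_subset_card_eq hya).choose_spec.1
    have : i ∈ T y := hsub' (hgy ▸ hi)
    simpa [hT] using this
  -- pick maximizing I
  have hSne : S.Nonempty := by
    have : a ≤ (Finset.univ : Finset (Fin p)).card := by simpa using hap
    obtain ⟨I, hI⟩ := Finset.exists_subset_card_eq this
    exact ⟨I, (hmemS I).mpr hI.2⟩
  obtain ⟨I₀, hI₀S, hI₀max⟩ := S.exists_max_image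
    (fun I => (Y.filter fun y => ∀ i ∈ I, y ∈ A i).card) hSne
  have hScard : S.card ≤ p ^ a := by
    have : S.card = p.choose a := by
      rw [hS, Finset.card_powersetCard, Finset.card_univ, Fintype.card_fin]
    rw [this]
    exact Nat.choose_le_pow p a
  have hsum3 : (B.card : ℝ) ≤ (p:ℝ) ^ a * ((Y.filter fun y => ∀ i ∈ I₀, y ∈ A i).card : ℝ) := by
    have h1 : B.card ≤ ∑ I ∈ S, (Y.filter fun y => ∀ i ∈ I, y ∈ A i).card := by
      rw [hfib]; exact Finset.sum_le_sum hfible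
    have h2 : ∑ I ∈ S, (Y.filter fun y => ∀ i ∈ I, y ∈ A i).card
        ≤ S.card * (Y.filter fun y => ∀ i ∈ I₀, y ∈ A i).card := by
      calc ∑ I ∈ S, (Y.filter fun y => ∀ i ∈ I, y ∈ A i).card
          ≤ ∑ _I ∈ S, (Y.filter fun y => ∀ i ∈ I₀, y ∈ A i).card :=
            Finset.sum_le_sum fun I hI => hI₀max I hI
        _ = S.card * (Y.filter fun y => ∀ i ∈ I₀, y ∈ A i).card := by
            rw [Finset.sum_const, smul_eq_mul]
    have h3 : B.card ≤ p ^ a * (Y.filter fun y => ∀ i ∈ I₀, y ∈ A i).card := by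
      calc B.card ≤ S.card * (Y.filter fun y => ∀ i ∈ I₀, y ∈ A i).card := le_trans h1 h2
        _ ≤ p ^ a * (Y.filter fun y => ∀ i ∈ I₀, y ∈ A i).card :=
            Nat.mul_le_mul_right _ hScard
    exact_mod_cast h3
  refine ⟨I₀, (hmemS I₀).mp hI₀S, ?_⟩
  have hpow : (0:ℝ) < (p:ℝ) ^ a := by positivity
  rw [inv_mul_eq_div, div_mul_eq_mul_div, div_le_iff₀ hpow]
  calc η * Y.card ≤ (B.card : ℝ) := hBcard
    _ ≤ (p:ℝ) ^ a * ((Y.filter fun y => ∀ i ∈ I₀, y ∈ A i).card : ℝ) := hsum3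
    _ = ((Y.filter fun y => ∀ i ∈ I₀, y ∈ A i).card : ℝ) * (p:ℝ) ^ a := mul_comm _ _
end

section
/- Let ℓ, p, q be positive integers with p(q−1) ≤ ℓ, and let x₁, ..., x_q be nonnegative integers with x₁ + ⋯ + x_q ≤ ℓ + p and x_i ≤ ℓ for all i. Then Σ_{i∈[q]} 2^{x_i} ≤ 2^ℓ + 2^p + q − 2. -/
/-!
Write `m` for a largest coordinate and `r` for the sum of the others. Then `r ≤ ℓ`: either
`m ≥ p` and `r ≤ ℓ + p - m`, or all coordinates are below `p` and `r ≤ (q - 1) p ≤ ℓ`.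
Since `2 ^ a + 2 ^ b ≤ 2 ^ (a + b) + 1`, the other coordinates contribute at most `2 ^ r + q - 2`,
and by convexity of `k ↦ 2 ^ k` the pair `(m, r)`, constrained by `m, r ≤ ℓ` and `m + r ≤ ℓ + p`,
gives `2 ^ m + 2 ^ r ≤ 2 ^ ℓ + 2 ^ p`.
-/

open Finset

namespace Nat

variable {b : ℕ}

theorem pow_add_pow_le_pow_add_add_one (hb : 1 ≤ b) (m n : ℕ) :
    b ^ m + b ^ n ≤ b ^ (m + n) + 1 := by
  have hm : 1 ≤ b ^ m := one_le_pow _ _ hb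
  have hn : 1 ≤ b ^ n := one_le_pow _ _ hb
  rw [pow_add]
  nlinarith

theorem sum_pow_add_one_le {ι : Type*} (hb : 1 ≤ b) (t : Finset ι) (x : ι → ℕ) :
    ∑ i ∈ t, b ^ x i + 1 ≤ b ^ (∑ i ∈ t, x i) + #t := by
  classical
  induction t using Finset.induction_on with
  | empty => simp
  | insert a t ha ih =>
    rw [sum_insert ha, sum_insert ha, card_insert_of_notMem ha]
    have := pow_add_pow_le_pow_add_add_one hb (x a) (∑ i ∈ t, x i)
    omega

theorem pow_add_pow_le_of_add_eq {k l m n : ℕ} (hb : 1 ≤ b) (hkm : k ≤ m) (hkn : k ≤ n)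
    (h : m + n = k + l) : b ^ m + b ^ n ≤ b ^ k + b ^ l := by
  obtain ⟨s, rfl⟩ := Nat.exists_eq_add_of_le hkm
  obtain rfl : l = n + s := by omega
  have hkn' : b ^ k ≤ b ^ n := pow_le_pow_right₀ hb hkn
  have hs : 1 ≤ b ^ s := one_le_pow _ _ hb
  rw [pow_add, pow_add]
  nlinarith

theorem pow_add_pow_le_pow_add_pow {ℓ p m n : ℕ} (hb : 1 ≤ b) (hm : m ≤ ℓ) (hn : n ≤ ℓ)
    (h : m + n ≤ ℓ + p) : b ^ m + b ^ n ≤ b ^ ℓ + b ^ p := by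
  rcases le_or_gt (m + n) ℓ with hmn | hmn
  · have := pow_add_pow_le_pow_add_add_one hb m n
    have : b ^ (m + n) ≤ b ^ ℓ := pow_le_pow_right₀ hb hmn
    have : 1 ≤ b ^ p := one_le_pow _ _ hb
    omega
  · have := pow_add_pow_le_of_add_eq (m := m) (n := n) (k := m + n - ℓ) (l := ℓ) hb
      (by omega) (by omega) (by omega)
    have : b ^ (m + n - ℓ) ≤ b ^ p := pow_le_pow_right₀ hb (by omega)
    omega

end Nat

theorem stmt_6_general (ℓ p q : ℕ)
    (h : p * (q - 1) ≤ ℓ) (x : Fin q → ℕ)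
    (hsum : ∑ i, x i ≤ ℓ + p) (hle : ∀ i, x i ≤ ℓ) :
    ∑ i, 2 ^ (x i) ≤ 2 ^ ℓ + 2 ^ p + q - 2 := by
  rcases isEmpty_or_nonempty (Fin q) with hempty | hnonempty
  · simp
  obtain ⟨i, -, hmax⟩ := univ.exists_max_image x univ_nonempty
  have hsplit := add_sum_erase univ x (mem_univ i)
  have hcard : #(univ.erase i) = q - 1 := by simp [card_erase_of_mem]
  have hrest : ∑ j ∈ univ.erase i, x j ≤ ℓ := by
    rcases le_total p (x i) with hpi | hip
    · omega
    · calc ∑ j ∈ univ.erase i, x j ≤ #(univ.erase i) • x i :=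
            sum_le_card_nsmul _ _ _ fun j _ => hmax j (mem_univ j)
        _ ≤ (q - 1) * p := by rw [hcard, smul_eq_mul]; gcongr
        _ ≤ ℓ := by rw [mul_comm]; exact h
  have hpair := Nat.pow_add_pow_le_pow_add_pow (b := 2) (p := p) one_le_two (hle i) hrest
    (by omega)
  have hothers := Nat.sum_pow_add_one_le one_le_two (univ.erase i) x
  have hq : 1 ≤ q := i.pos
  rw [← add_sum_erase univ _ (mem_univ i)]
  omega

theorem stmt_6 (ℓ p q : ℕ) (hℓ : 1 ≤ ℓ) (hp : 1 ≤ p) (hq : 1 ≤ q)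
    (h : p * (q - 1) ≤ ℓ) (x : Fin q → ℕ)
    (hsum : ∑ i, x i ≤ ℓ + p) (hle : ∀ i, x i ≤ ℓ) :
    ∑ i, 2 ^ (x i) ≤ 2 ^ ℓ + 2 ^ p + q - 2 :=
  stmt_6_general ℓ p q h x hsum hle
end

section
/- Let p, s, t be positive integers with t(t−2) ≤ s ≤ t² and s+t−1 ≤ p. Then for every integer m ≥ 2, the inequality s(t−1)/t < (s+t−m)(m−1)/m implies (m−t)(m − (s+t)/t) < 0, which has no integer solutions m when t−1 ≤ (s+t)/t ≤ t+1; hence there is no integer m ≥ 2 such that s(t−1)/t < (s+t−m)(m−1)/m. -/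
theorem stmt_8 (p s t : ℕ) (hp : 1 ≤ p) (hs : 1 ≤ s) (ht : 1 ≤ t)
    (h1 : t * (t - 2) ≤ s) (h2 : s ≤ t ^ 2) (h3 : s + t - 1 ≤ p) :
    ¬ ∃ m : ℕ, 2 ≤ m ∧
      (s : ℝ) * ((t : ℝ) - 1) / t < ((s : ℝ) + t - m) * ((m : ℝ) - 1) / m := by
  rintro ⟨m, hm, hlt⟩
  have ht2 : t * t ≤ s + 2 * t := by
    have h : t ≤ t - 2 + 2 := by omega
    calc t * t ≤ t * (t - 2 + 2) := Nat.mul_le_mul_left t h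
    _ = t * (t - 2) + 2 * t := by ring
    _ ≤ s + 2 * t := by omega
  have htR : (1 : ℝ) ≤ t := by exact_mod_cast ht
  have hmR : (2 : ℝ) ≤ m := by exact_mod_cast hm
  have ht0 : (0 : ℝ) < t := by linarith
  have hm0 : (0 : ℝ) < m := by linarith
  have ht2R : (t : ℝ) * t ≤ s + 2 * t := by exact_mod_cast ht2
  have h2R : (s : ℝ) ≤ t ^ 2 := by exact_mod_cast h2
  rw [div_lt_div_iff₀ ht0 hm0] at hlt
  rcases lt_trichotomy m t with h | h | h
  · have hmt : (m : ℝ) + 1 ≤ t := by exact_mod_cast h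
    have htm : (t : ℝ) * m ≤ s + t := by nlinarith [mul_le_mul_of_nonneg_left hmt ht0.le]
    nlinarith [mul_nonneg (by linarith : (0:ℝ) ≤ t - m) (by linarith : (0:ℝ) ≤ s + t - t * m)]
  · subst h
    nlinarith
  · have hmt : (t : ℝ) + 1 ≤ m := by exact_mod_cast h
    have htm : (s : ℝ) + t ≤ t * m := by nlinarith [mul_le_mul_of_nonneg_left hmt ht0.le]
    nlinarith [mul_nonneg (by linarith : (0:ℝ) ≤ m - t) (by linarith : (0:ℝ) ≤ t * m - s - t)]
end

section
/- Let G be a graph whose vertex set is partitioned into independent-set-free classes as follows: V(G) = X ∪ {v₀} where every vertex of X ∪ {v₀} spans a clique, and for each u ∈ X there is h(u) ∈ [p−1] recording a 'rotation'. If vertices u, u' of a clique U (inside one side of the construction) satisfy: u is an h_i-rotation of v₀ and u' is an h_j-rotation of v₀ with h_i, h_j ∈ [p−1] and triangle-closure (an h-rotation relation with |1−ρ^{h_i−h_j−h}| ≤ 3√μ forcing h = h_i − h_j when 3√μ < 4/p), then h_i ≠ h_j. Consequently, any clique containing v₀ has at most p vertices, i.e. the graph is K_{p+1}-free. -/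
/-- The primitive `p`-th root of unity `ρ = exp(2πi/p)`. -/
noncomputable def rho (p : ℕ) : ℂ := Complex.exp (2 * Real.pi * Complex.I / p)

lemma rho_pow (p : ℕ) (hp : 2 ≤ p) (m : ℕ) :
    (rho p) ^ m = Complex.exp (((2 * Real.pi * m / p : ℝ) : ℂ) * Complex.I) := by
  rw [rho, ← Complex.exp_nat_mul]
  congr 1
  have hp0 : (p : ℂ) ≠ 0 := Nat.cast_ne_zero.mpr (by omega)
  push_cast
  field_simp

lemma norm_one_sub_exp (θ : ℝ) :
    ‖(1 : ℂ) - Complex.exp ((θ:ℂ) * Complex.I)‖ = 2 * |Real.sin (θ / 2)| := by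
  rw [Complex.exp_mul_I, Complex.norm_def, Complex.normSq_apply]
  push_cast [Complex.cos_ofReal_re]
  simp only [Complex.add_re, Complex.add_im, Complex.one_re, Complex.one_im, Complex.sub_re,
    Complex.sub_im, Complex.mul_re, Complex.mul_im, Complex.I_re, Complex.I_im,
    Complex.cos_ofReal_re, Complex.cos_ofReal_im, Complex.sin_ofReal_re, Complex.sin_ofReal_im]
  rw [Real.abs_sin_half]
  rw [show (1 - (Real.cos θ + (Real.sin θ * 0 - 0 * 1))) * (1 - (Real.cos θ + (Real.sin θ * 0 - 0 * 1))) + (0 - (0 + (Real.sin θ * 1 + 0 * 0))) * (0 - (0 + (Real.sin θ * 1 + 0 * 0))) = 2 - 2 * Real.cos θ by nlinarith [Real.sin_sq_add_cos_sq θ]]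
  rw [show (2:ℝ) * Real.sqrt ((1 - Real.cos θ)/2) = Real.sqrt (4 * ((1 - Real.cos θ)/2)) by
    rw [show (4:ℝ) = 2^2 by norm_num, Real.sqrt_mul (by positivity), Real.sqrt_sq (by norm_num)]]
  ring_nf

lemma norm_one_sub_rho_pow (p : ℕ) (hp : 2 ≤ p) (m : ℕ) (h1 : 1 ≤ m) (h2 : m ≤ p - 1) :
    4 / p ≤ ‖(1 : ℂ) - (rho p) ^ m‖ := by
  have hppos : (0:ℝ) < p := by positivity
  rw [rho_pow p hp m, norm_one_sub_exp]
  have hθ : (2 * Real.pi * m / p) / 2 = Real.pi * m / p := by ring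
  rw [hθ]
  have hm1 : (1:ℝ) ≤ m := by exact_mod_cast h1
  have hm2 : (m:ℝ) ≤ p - 1 := by
    have : (m:ℝ) ≤ ((p-1 : ℕ) : ℝ) := by exact_mod_cast h2
    have : ((p-1:ℕ):ℝ) = (p:ℝ) - 1 := by
      have : (1:ℕ) ≤ p := by omega
      push_cast [this]; ring
    linarith [show (m:ℝ) ≤ ((p-1:ℕ):ℝ) by exact_mod_cast h2]
  have hpi := Real.pi_pos
  have hx1 : Real.pi / p ≤ Real.pi * m / p := by gcongr; nlinarith
  have hx2 : Real.pi * m / p ≤ Real.pi - Real.pi / p := by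
    rw [le_sub_iff_add_le, ← add_div, div_le_iff₀ hppos]
    nlinarith [mul_le_mul_of_nonneg_left hm2 hpi.le]
  -- sin (π m / p) ≥ sin (π / p)
  have hsin : Real.sin (Real.pi / p) ≤ Real.sin (Real.pi * m / p) := by
    rcases le_or_gt (Real.pi * m / p) (Real.pi / 2) with hc | hc
    · have h0 : (0:ℝ) < Real.pi / p := by positivity
      exact Real.sin_le_sin_of_le_of_le_pi_div_two (by linarith) hc hx1
    · rw [show Real.sin (Real.pi * m / p) = Real.sin (Real.pi - Real.pi * m / p) from
        (Real.sin_pi_sub _).symm]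
      have h0 : (0:ℝ) < Real.pi / p := by positivity
      apply Real.sin_le_sin_of_le_of_le_pi_div_two (by linarith) (by linarith)
      have : Real.pi / p ≤ Real.pi / 2 := by
        apply div_le_div_of_nonneg_left hpi.le (by norm_num)
        exact_mod_cast hp
      linarith
  have hbound : 4 / p ≤ 2 * Real.sin (Real.pi / p) := by
    have := Real.mul_le_sin (x := Real.pi / p) (by positivity)
      (by apply div_le_div_of_nonneg_left hpi.le (by norm_num); exact_mod_cast hp)
    have h2p : 2 / Real.pi * (Real.pi / p) = 2 / p := by field_simp
    rw [h2p] at this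
    have h4 : (4:ℝ)/p = 2*(2/p) := by ring
    linarith
  have hpos : 0 < Real.sin (Real.pi * m / p) := by
    apply Real.sin_pos_of_pos_of_lt_pi (by positivity)
    have : Real.pi / p > 0 := by positivity
    linarith
  rw [abs_of_pos hpos]
  linarith

/-- `w` is an `h`-rotation of `w'` (with `h ∈ [p−1]`): `‖w − ρ^h w'‖ ≤ √μ`. -/
noncomputable def IsRot (p k : ℕ) (μ : ℝ) (h : ℕ)
    (w w' : EuclideanSpace ℂ (Fin k)) : Prop :=
  1 ≤ h ∧ h ≤ p - 1 ∧ ‖w - (rho p) ^ h • w'‖ ≤ Real.sqrt μ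

theorem stmt_10 (p k : ℕ) (hp : 2 ≤ p) (μ : ℝ) (hμ : 0 < μ)
    (hμ' : 3 * Real.sqrt μ < 4 / p) :
    (∀ v₀ u u' : EuclideanSpace ℂ (Fin k), ‖v₀‖ = 1 → ‖u‖ = 1 → ‖u'‖ = 1 →
      ∀ hi hj h : ℕ, IsRot p k μ hi u v₀ → IsRot p k μ hj u' v₀ →
        IsRot p k μ h u u' → hi ≠ hj) ∧
    (∀ S : Finset (EuclideanSpace ℂ (Fin k)), (∀ w ∈ S, ‖w‖ = 1) →
      (∀ w ∈ S, ∀ w' ∈ S, w ≠ w' → ∃ h : ℕ, IsRot p k μ h w w') →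
      S.card ≤ p) := by
  have part1 : ∀ v₀ u u' : EuclideanSpace ℂ (Fin k), ‖v₀‖ = 1 → ‖u‖ = 1 → ‖u'‖ = 1 →
      ∀ hi hj h : ℕ, IsRot p k μ hi u v₀ → IsRot p k μ hj u' v₀ →
        IsRot p k μ h u u' → hi ≠ hj := by
    intro v₀ u u' hv hu hu' hi hj h hri hrj hrh heq
    obtain ⟨_, _, hni⟩ := hri
    obtain ⟨_, _, hnj⟩ := hrj
    obtain ⟨hh1, hh2, hnh⟩ := hrh
    have hdecomp : u' - (rho p)^h • u' =
        (u' - (rho p)^hj • v₀) - (u - (rho p)^hi • v₀) + (u - (rho p)^h • u') := by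
      rw [heq]; abel
    have key : ‖u' - (rho p)^h • u'‖ ≤ 3 * Real.sqrt μ := by
      rw [hdecomp]
      calc ‖(u' - (rho p)^hj • v₀) - (u - (rho p)^hi • v₀) + (u - (rho p)^h • u')‖
          ≤ ‖(u' - (rho p)^hj • v₀) - (u - (rho p)^hi • v₀)‖ + ‖u - (rho p)^h • u'‖ :=
            norm_add_le _ _
        _ ≤ ‖u' - (rho p)^hj • v₀‖ + ‖u - (rho p)^hi • v₀‖ + ‖u - (rho p)^h • u'‖ := by
            have := norm_sub_le (u' - (rho p)^hj • v₀) (u - (rho p)^hi • v₀)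
            linarith
        _ ≤ 3 * Real.sqrt μ := by linarith
    have hkey2 : ‖u' - (rho p)^h • u'‖ = ‖(1:ℂ) - (rho p)^h‖ := by
      rw [show u' - (rho p)^h • u' = ((1:ℂ) - (rho p)^h) • u' by
        rw [sub_smul, one_smul], norm_smul, hu', mul_one]
    have := norm_one_sub_rho_pow p hp h hh1 hh2
    rw [hkey2] at key
    linarith
  refine ⟨part1, ?_⟩
  intro S hnorm hrot
  classical
  by_contra hcard
  push_neg at hcard
  obtain ⟨v₀, hv₀⟩ : S.Nonempty := Finset.card_pos.mp (by omega)
  set T := S.erase v₀ with hT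
  have hex : ∀ u ∈ T, ∃ h : ℕ, IsRot p k μ h u v₀ := fun u hu =>
    hrot u (Finset.mem_of_mem_erase hu) v₀ hv₀ (Finset.ne_of_mem_erase hu)
  choose! g hg using hex
  have hmaps : ∀ u ∈ T, g u ∈ Finset.Icc 1 (p-1) := by
    intro u hu
    obtain ⟨a, b, _⟩ := hg u hu
    exact Finset.mem_Icc.mpr ⟨a, b⟩
  have hlt : (Finset.Icc 1 (p-1)).card < T.card := by
    rw [Nat.card_Icc, Finset.card_erase_of_mem hv₀]
    omega
  obtain ⟨u, hu, u', hu', hne, hgeq⟩ :=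
    Finset.exists_ne_map_eq_of_card_lt_of_maps_to hlt hmaps
  obtain ⟨h, hh⟩ := hrot u (Finset.mem_of_mem_erase hu) u' (Finset.mem_of_mem_erase hu') hne
  exact part1 v₀ u u' (hnorm v₀ hv₀) (hnorm u (Finset.mem_of_mem_erase hu))
    (hnorm u' (Finset.mem_of_mem_erase hu')) (g u) (g u') h (hg u hu) (hg u' hu') hh hgeq
end

section
/- Let p ≥ 2 and let U be a finite set together with a map assigning to each ordered pair of distinct elements (u, u') a value h(u,u') ∈ ℤ_p ∖ {0} satisfying the cocycle condition h(u,u') = h(u,u₀) − h(u',u₀) for a fixed u₀ ∈ U and all u, u' ∈ U∖{u₀}, and such that h(u,u₀) ≠ h(u',u₀) for distinct u, u'. If |U| = u with u − 1 ≤ ⌊p/2⌋, then there exist distinct elements x, y ∈ U and an integer m with u − 1 ≤ m ≤ ⌊p/2⌋ such that (after possibly swapping x and y) h(x,y) ≡ m (mod p). -/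
theorem stmt_11 {α : Type*} (p u : ℕ) (hp : 2 ≤ p) (hu : 2 ≤ u)
    (U : Finset α) (u₀ : α) (hu₀ : u₀ ∈ U) (hcard : U.card = u)
    (hhalf : u - 1 ≤ p / 2)
    (f : α → α → ZMod p)
    (hne : ∀ x ∈ U, ∀ y ∈ U, x ≠ y → f x y ≠ 0)
    (hanti : ∀ x ∈ U, ∀ y ∈ U, x ≠ y → f x y = - f y x)
    (hcoc : ∀ x ∈ U, ∀ y ∈ U, x ≠ u₀ → y ≠ u₀ → x ≠ y → f x y = f x u₀ - f y u₀)
    (hinj : ∀ x ∈ U, ∀ y ∈ U, x ≠ u₀ → y ≠ u₀ → x ≠ y → f x u₀ ≠ f y u₀) :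
    ∃ x ∈ U, ∃ y ∈ U, x ≠ y ∧ ∃ m : ℕ, u - 1 ≤ m ∧ m ≤ p / 2 ∧
      (f x y = (m : ZMod p) ∨ f y x = (m : ZMod p)) := by
  classical
  have hp0 : NeZero p := ⟨by omega⟩
  set g : α → ZMod p := fun x => if x = u₀ then 0 else f x u₀ with hg
  have hgval : ∀ x, ((g x).val : ZMod p) = g x := by
    intro x
    simp [ZMod.natCast_val, ZMod.cast_id]
  have hg_inj : ∀ x ∈ U, ∀ y ∈ U, x ≠ y → g x ≠ g y := by
    intro x hx y hy hxy
    by_cases hx0 : x = u₀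
    · have hy0 : y ≠ u₀ := fun h => hxy (hx0.trans h.symm)
      simp only [hg, if_pos hx0, if_neg hy0]
      exact fun h => hne y hy u₀ hu₀ hy0 h.symm
    · by_cases hy0 : y = u₀
      · simp only [hg, if_pos hy0, if_neg hx0]
        exact hne x hx u₀ hu₀ hx0
      · simp only [hg, if_neg hx0, if_neg hy0]
        exact hinj x hx y hy hx0 hy0 hxy
  have hfg : ∀ x ∈ U, ∀ y ∈ U, x ≠ y → f x y = g x - g y := by
    intro x hx y hy hxy
    by_cases hx0 : x = u₀
    · have hy0 : y ≠ u₀ := fun h => hxy (hx0.trans h.symm)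
      simp only [hg, if_pos hx0, if_neg hy0]
      rw [hanti x hx y hy hxy, hx0]
      ring
    · by_cases hy0 : y = u₀
      · simp only [hg, if_pos hy0, if_neg hx0]
        rw [hy0]
        ring
      · simp only [hg, if_neg hx0, if_neg hy0]
        exact hcoc x hx y hy hx0 hy0 hxy
  by_cases hcase : ∀ x ∈ U, x ≠ u₀ → min (g x).val (p - (g x).val) < u - 1
  · -- all nonzero values are close to 0; pigeonhole
    have hbound : ∀ z ∈ U.erase u₀,
        1 ≤ (g z).val ∧ (g z).val < p ∧
          ((g z).val ≤ u - 2 ∨ p - (u - 2) ≤ (g z).val) := by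
      intro z hz
      obtain ⟨hzne, hzU⟩ := Finset.mem_erase.mp hz
      have h0 : g z ≠ 0 := by
        simpa [hg, hzne] using hne z hzU u₀ hu₀ hzne
      have hv1 : (g z).val ≠ 0 := fun h => h0 ((ZMod.val_eq_zero _).mp h)
      have hvlt : (g z).val < p := ZMod.val_lt _
      have hm := hcase z hzU hzne
      omega
    have main : ∀ a ∈ U, ∀ b ∈ U, a ≠ b →
        (g b).val = (g a).val + (p - (u - 1)) →
        ∃ x ∈ U, ∃ y ∈ U, x ≠ y ∧ ∃ m : ℕ, u - 1 ≤ m ∧ m ≤ p / 2 ∧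
          (f x y = (m : ZMod p) ∨ f y x = (m : ZMod p)) := by
      intro a haU b hbU hab hval
      refine ⟨a, haU, b, hbU, hab, u - 1, le_refl _, hhalf, Or.inl ?_⟩
      have hup : u - 1 ≤ p := le_trans hhalf (Nat.div_le_self _ _)
      have h1 : ((p - (u - 1) : ℕ) : ZMod p) = - ((u - 1 : ℕ) : ZMod p) := by
        rw [Nat.cast_sub hup, ZMod.natCast_self]; ring
      rw [hfg a haU b hbU hab, ← hgval a, ← hgval b, hval, Nat.cast_add, h1]
      ring
    have hT : (U.erase u₀).card = u - 1 := by
      rw [Finset.card_erase_of_mem hu₀, hcard]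
    have hmaps : ∀ x ∈ U.erase u₀,
        (if (g x).val ≤ u - 2 then (g x).val else (g x).val - (p - (u - 1)))
          ∈ Finset.Icc 1 (u - 2) := by
      intro x hx
      obtain ⟨hv1, hvlt, hdisj⟩ := hbound x hx
      simp only [Finset.mem_Icc]
      split <;> omega
    have hlt : (Finset.Icc 1 (u - 2)).card < (U.erase u₀).card := by
      rw [Nat.card_Icc, hT]; omega
    obtain ⟨x, hx, y, hy, hxy, heq⟩ :=
      Finset.exists_ne_map_eq_of_card_lt_of_maps_to hlt hmaps
    obtain ⟨hxne, hxU⟩ := Finset.mem_erase.mp hx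
    obtain ⟨hyne, hyU⟩ := Finset.mem_erase.mp hy
    have hgxy : g x ≠ g y := hg_inj x hxU y hyU hxy
    obtain ⟨hvx1, hvxlt, hdx⟩ := hbound x hx
    obtain ⟨hvy1, hvylt, hdy⟩ := hbound y hy
    have hvne : (g x).val ≠ (g y).val := by
      intro h
      exact hgxy (by rw [← hgval x, ← hgval y, h])
    by_cases hxs : (g x).val ≤ u - 2
    · by_cases hys : (g y).val ≤ u - 2
      · rw [if_pos hxs, if_pos hys] at heq
        exact absurd heq hvne
      · rw [if_pos hxs, if_neg hys] at heq
        exact main x hxU y hyU hxy (by omega)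
    · by_cases hys : (g y).val ≤ u - 2
      · rw [if_neg hxs, if_pos hys] at heq
        exact main y hyU x hxU (Ne.symm hxy) (by omega)
      · rw [if_neg hxs, if_neg hys] at heq
        exact absurd (by omega : (g x).val = (g y).val) hvne
  · push_neg at hcase
    obtain ⟨x, hxU, hxne, hmag⟩ := hcase
    have hvlt : (g x).val < p := ZMod.val_lt _
    refine ⟨x, hxU, u₀, hu₀, hxne, min (g x).val (p - (g x).val), hmag, by omega, ?_⟩
    have hgx : g x = f x u₀ := by simp [hg, hxne]
    rcases le_total (g x).val (p - (g x).val) with h | h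
    · left
      rw [min_eq_left h, ← hgx]
      exact (hgval x).symm
    · right
      have h2 : ((p - (g x).val : ℕ) : ZMod p) = - g x := by
        rw [Nat.cast_sub (le_of_lt hvlt), ZMod.natCast_self, hgval x]; ring
      rw [min_eq_right h, hanti u₀ hu₀ x hxU (Ne.symm hxne), ← hgx]
      exact h2.symm
end
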